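/- arXiv:1610.03803 — 7 statements merged into one kernel-verified Lean document; each statement's English description precedes it below -/
import Mathlib

section
/- If a positive decreasing sequence (β_n) satisfies Σβ_n = ∞, Σ(β_n)² < ∞, and limsup 1/(n β_n) < ∞, and (x_n) is a sequence of indicator values (each 0 or 1) with liminf (1/n) Σ_{k≤n} x_k > 0, then Σ_{n} β_n x_n = ∞. -/
open Filter

theorem stmt_0 (β x : ℕ → ℝ) (δ : ℝ) (hδ : 0 < δ)
    (hβpos : ∀ n, 0 < β n) (hβmono : Antitone β)
    (hβdiv : Tendsto (fun n => ∑ k ∈ Finset.range n, β k) atTop atTop)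
    (hβsq : Summable (fun n => (β n) ^ 2))
    (hβlim : ∃ C : ℝ, ∀ᶠ n : ℕ in atTop, 1 / ((n : ℝ) * β n) ≤ C)
    (hx : ∀ n, x n = 0 ∨ x n = 1)
    (hliminf : δ ≤ liminf (fun n : ℕ => (1 / (n : ℝ)) * ∑ k ∈ Finset.range n, x k) atTop) :
    Tendsto (fun n => ∑ k ∈ Finset.range n, β k * x k) atTop atTop := by
  set c : ℝ := δ / 2 with hc_def
  have hc : 0 < c := half_pos hδ
  have hx0 : ∀ n, 0 ≤ x n := by
    intro n; rcases hx n with h | h <;> rw [h] <;> norm_num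
  have hbdd : IsBoundedUnder (· ≥ ·) atTop
      (fun n : ℕ => (1 / (n : ℝ)) * ∑ k ∈ Finset.range n, x k) := by
    refine isBoundedUnder_of ⟨0, fun n => ?_⟩
    exact mul_nonneg (by positivity) (Finset.sum_nonneg fun k _ => hx0 k)
  have hev : ∀ᶠ n : ℕ in atTop,
      c < (1 / (n : ℝ)) * ∑ k ∈ Finset.range n, x k :=
    eventually_lt_of_lt_liminf (lt_of_lt_of_le (by linarith) hliminf) hbdd
  obtain ⟨N0, hN0⟩ := eventually_atTop.mp hev
  set N : ℕ := max N0 1 with hN_def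
  have hN1 : 1 ≤ N := le_max_right _ _
  have hS : ∀ n, N ≤ n → c * n ≤ ∑ k ∈ Finset.range n, x k := by
    intro n hn
    have hn1 : 1 ≤ n := le_trans hN1 hn
    have hnpos : (0 : ℝ) < n := by exact_mod_cast hn1
    have h := hN0 n (le_trans (le_max_left _ _) hn)
    rw [one_div, inv_mul_eq_div] at h
    exact le_of_lt ((lt_div_iff₀ hnpos).mp h)
  -- key inequality by induction
  have key : ∀ n, N ≤ n →
      c * ∑ i ∈ Finset.Ico N n, β i
        + β (n - 1) * ((∑ k ∈ Finset.range n, x k) - c * n)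
      ≤ ∑ i ∈ Finset.range n, β i * x i := by
    intro n hn
    induction n, hn using Nat.le_induction with
    | base =>
        rw [Finset.Ico_self, Finset.sum_empty, mul_zero, zero_add]
        have h1 : β (N - 1) * (∑ k ∈ Finset.range N, x k)
            ≤ ∑ i ∈ Finset.range N, β i * x i := by
          rw [Finset.mul_sum]
          refine Finset.sum_le_sum fun i hi => ?_
          have hi' : i ≤ N - 1 := Nat.le_sub_one_of_lt (Finset.mem_range.mp hi)
          exact mul_le_mul_of_nonneg_right (hβmono hi') (hx0 i)
        have h2 : (0:ℝ) ≤ c * N := by positivity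
        nlinarith [hβpos (N - 1)]
    | succ n hn ih =>
        have hSn : c * n ≤ ∑ k ∈ Finset.range n, x k := hS n hn
        rw [Finset.sum_Ico_succ_top hn, Finset.sum_range_succ,
          Finset.sum_range_succ (fun i => β i * x i)]
        have hmono : β n ≤ β (n - 1) := hβmono (Nat.sub_le n 1)
        have hpred : n + 1 - 1 = n := rfl
        rw [hpred]
        push_cast
        nlinarith [hβpos n]
  have key2 : ∀ n, N ≤ n →
      c * ∑ i ∈ Finset.Ico N n, β i ≤ ∑ i ∈ Finset.range n, β i * x i := by
    intro n hn
    have hSn : c * n ≤ ∑ k ∈ Finset.range n, x k := hS n hn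
    have := key n hn
    nlinarith [hβpos (n - 1)]
  have hdiv2 : Tendsto (fun n : ℕ => c * ∑ i ∈ Finset.Ico N n, β i) atTop atTop := by
    have h1 : Tendsto (fun n : ℕ =>
        (∑ i ∈ Finset.range n, β i) - ∑ i ∈ Finset.range N, β i) atTop atTop := by
      simpa [sub_eq_add_neg] using
        tendsto_atTop_add_const_right atTop (-(∑ i ∈ Finset.range N, β i)) hβdiv
    have h2 : Tendsto (fun n : ℕ =>
        c * ((∑ i ∈ Finset.range n, β i) - ∑ i ∈ Finset.range N, β i)) atTop atTop :=
      h1.const_mul_atTop hc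
    refine h2.congr' ?_
    filter_upwards [eventually_ge_atTop N] with n hn
    rw [Finset.sum_Ico_eq_sub _ hn]
  refine tendsto_atTop_mono' _ ?_ hdiv2
  filter_upwards [eventually_ge_atTop N] with n hn
  exact key2 n hn
end

section
/- Suppose (X_n) is a sequence of {0,1}-valued random variables adapted to a filtration (F_n) such that P(X_{n+ℓ} = 1 | F_n) ≥ δ₀ > 0 for all n, for some fixed integer ℓ ≥ 1. Then almost surely liminf_{n→∞} (1/n) Σ_{k=1}^n X_k ≥ δ₀/ℓ. -/
open Filter MeasureTheory Topology

/-!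
Sample every `ℓ`-th step: `Y j = X ((j + 1) * ℓ)` is measurable for `𝒢 (j + 1)`, where
`𝒢 j = ℱ (j * ℓ)`, and `E[Y j | 𝒢 j] ≥ δ₀`. The centred variables `Y j - E[Y j | 𝒢 j]` are bounded
martingale differences, so `∑ (Y j - E[Y j | 𝒢 j]) / (j + 1)` is an `L²`-bounded martingale and
converges almost surely; by Kronecker's lemma the averages of the centred variables tend to `0`.
Hence the averages of the `Y j` are asymptotically at least `δ₀`, and since the sampled times have
density `1 / ℓ`, the averages of the `X k` are asymptotically at least `δ₀ / ℓ`.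
-/

theorem sum_range_eq_mul_sum_div_succ_sub (a : ℕ → ℝ) (n : ℕ) :
    ∑ j ∈ Finset.range n, a j = n * ∑ j ∈ Finset.range n, a j / (j + 1)
      - ∑ j ∈ Finset.range n, ∑ i ∈ Finset.range j, a i / (i + 1) := by
  induction n with
  | zero => simp
  | succ n ih =>
    simp only [Finset.sum_range_succ, ih]
    push_cast
    field_simp
    ring

theorem tendsto_inv_mul_sum_of_tendsto_sum_div_succ {a : ℕ → ℝ} {L : ℝ}
    (h : Tendsto (fun n => ∑ j ∈ Finset.range n, a j / (j + 1)) atTop (𝓝 L)) :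
    Tendsto (fun n : ℕ => (n : ℝ)⁻¹ * ∑ j ∈ Finset.range n, a j) atTop (𝓝 0) := by
  rw [← sub_self L]
  refine (h.sub h.cesaro).congr' ?_
  filter_upwards [eventually_ne_atTop 0] with n hn
  rw [sum_range_eq_mul_sum_div_succ_sub a n, mul_sub, inv_mul_cancel_left₀ (by exact_mod_cast hn)]

section MartingaleDifference

variable {Ω : Type*} {m0 : MeasurableSpace Ω} {μ : Measure Ω}

theorem integral_mul_eq_zero_of_condExp_eq_zero [IsFiniteMeasure μ] {m : MeasurableSpace Ω}
    (hm : m ≤ m0) {f g : Ω → ℝ} (hg : StronglyMeasurable[m] g) (hgf : Integrable (g * f) μ)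
    (hf : Integrable f μ) (hf0 : μ[f|m] =ᵐ[μ] 0) : ∫ ω, g ω * f ω ∂μ = 0 :=
  calc ∫ ω, g ω * f ω ∂μ = ∫ ω, μ[g * f|m] ω ∂μ := (integral_condExp hm).symm
    _ = ∫ ω, (g * 0 : Ω → ℝ) ω ∂μ :=
      integral_congr_ae ((condExp_mul_of_stronglyMeasurable_left hg hgf hf).trans
        (EventuallyEq.rfl.mul hf0))
    _ = 0 := by simp

theorem eLpNorm_one_le_of_integral_sq_le [IsProbabilityMeasure μ] {g : Ω → ℝ} (hg : MemLp g 2 μ)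
    {K : ℝ} (hK : ∫ ω, g ω ^ 2 ∂μ ≤ K) : eLpNorm g 1 μ ≤ ENNReal.ofReal ((1 + K) / 2) := by
  have hg1 : Integrable g μ := hg.integrable one_le_two
  have habs : ∫ ω, |g ω| ∂μ ≤ (1 + ∫ ω, g ω ^ 2 ∂μ) / 2 := by
    calc ∫ ω, |g ω| ∂μ ≤ ∫ ω, (1 + g ω ^ 2) / 2 ∂μ :=
          integral_mono hg1.abs (((integrable_const 1).add hg.integrable_sq).div_const 2)
            fun ω => by nlinarith [sq_nonneg (|g ω| - 1), sq_abs (g ω)]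
      _ = (1 + ∫ ω, g ω ^ 2 ∂μ) / 2 := by
          rw [integral_div, integral_add (integrable_const 1) hg.integrable_sq]
          simp
  rw [eLpNorm_one_eq_lintegral_enorm, ← ofReal_integral_norm_eq_lintegral_enorm hg1]
  exact ENNReal.ofReal_le_ofReal (by simp only [Real.norm_eq_abs]; linarith)

variable {ℱ : Filtration ℕ m0} {f : ℕ → Ω → ℝ}

theorem martingale_sum_range_of_condExp_eq_zero [IsFiniteMeasure μ]
    (hf : ∀ j, StronglyMeasurable[ℱ (j + 1)] (f j)) (hint : ∀ j, Integrable (f j) μ)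
    (hf0 : ∀ j, μ[f j|ℱ j] =ᵐ[μ] 0) :
    Martingale (fun n ω => ∑ j ∈ Finset.range n, f j ω) ℱ μ := by
  refine martingale_of_condExp_sub_eq_zero_nat
    (fun n => Finset.stronglyMeasurable_fun_sum _ fun j hj =>
      (hf j).mono (ℱ.mono (Finset.mem_range.1 hj)))
    (fun n => integrable_finsetSum _ fun j _ => hint j) fun n => ?_
  have hdiff : (fun ω => ∑ j ∈ Finset.range (n + 1), f j ω)
      - (fun ω => ∑ j ∈ Finset.range n, f j ω) = f n := by
    ext ω
    simp [Finset.sum_range_succ]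
  rw [hdiff]
  exact hf0 n

theorem integral_sq_sum_range_of_condExp_eq_zero [IsFiniteMeasure μ]
    (hf : ∀ j, StronglyMeasurable[ℱ (j + 1)] (f j)) (hf2 : ∀ j, MemLp (f j) 2 μ)
    (hf0 : ∀ j, μ[f j|ℱ j] =ᵐ[μ] 0) (n : ℕ) :
    ∫ ω, (∑ j ∈ Finset.range n, f j ω) ^ 2 ∂μ = ∑ j ∈ Finset.range n, ∫ ω, f j ω ^ 2 ∂μ := by
  induction n with
  | zero => simp
  | succ n ih =>
    set S : Ω → ℝ := fun ω => ∑ j ∈ Finset.range n, f j ω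
    have hS : StronglyMeasurable[ℱ n] S := Finset.stronglyMeasurable_fun_sum _ fun j hj =>
      (hf j).mono (ℱ.mono (Finset.mem_range.1 hj))
    have hS2 : MemLp S 2 μ := memLp_finsetSum _ fun j _ => hf2 j
    have hSf : Integrable (S * f n) μ := hS2.integrable_mul (hf2 n)
    have hcross : ∫ ω, S ω * f n ω ∂μ = 0 :=
      integral_mul_eq_zero_of_condExp_eq_zero (ℱ.le n) hS hSf
        ((hf2 n).integrable one_le_two) (hf0 n)
    calc ∫ ω, (∑ j ∈ Finset.range (n + 1), f j ω) ^ 2 ∂μ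
        = ∫ ω, S ω ^ 2 + 2 * (S ω * f n ω) + f n ω ^ 2 ∂μ := by
          congr 1 with ω
          rw [Finset.sum_range_succ]
          ring
      _ = ∑ j ∈ Finset.range (n + 1), ∫ ω, f j ω ^ 2 ∂μ := by
          have hcross2 : Integrable (fun ω => 2 * (S ω * f n ω)) μ := hSf.const_mul 2
          have hfirst : Integrable (fun ω => S ω ^ 2 + 2 * (S ω * f n ω)) μ :=
            hS2.integrable_sq.add hcross2
          rw [integral_add hfirst (hf2 n).integrable_sq,
            integral_add hS2.integrable_sq hcross2, integral_const_mul, hcross, ih,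
            Finset.sum_range_succ]
          ring

theorem ae_exists_tendsto_sum_range_of_condExp_eq_zero [IsProbabilityMeasure μ]
    (hf : ∀ j, StronglyMeasurable[ℱ (j + 1)] (f j)) (hf2 : ∀ j, MemLp (f j) 2 μ)
    (hf0 : ∀ j, μ[f j|ℱ j] =ᵐ[μ] 0) (hsum : Summable fun j => ∫ ω, f j ω ^ 2 ∂μ) :
    ∀ᵐ ω ∂μ, ∃ L, Tendsto (fun n => ∑ j ∈ Finset.range n, f j ω) atTop (𝓝 L) := by
  have hL1 : ∀ n, eLpNorm (fun ω => ∑ j ∈ Finset.range n, f j ω) 1 μ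
      ≤ Real.toNNReal ((1 + ∑' j, ∫ ω, f j ω ^ 2 ∂μ) / 2) := fun n =>
    eLpNorm_one_le_of_integral_sq_le (memLp_finsetSum _ fun j _ => hf2 j)
      ((integral_sq_sum_range_of_condExp_eq_zero hf hf2 hf0 n).trans_le
        (hsum.sum_le_tsum _ fun j _ => integral_nonneg fun ω => sq_nonneg _))
  have hmart := martingale_sum_range_of_condExp_eq_zero hf
    (fun j => (hf2 j).integrable one_le_two) hf0
  filter_upwards [hmart.submartingale.ae_tendsto_limitProcess hL1] with ω hω
  exact ⟨_, hω⟩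

theorem ae_tendsto_inv_mul_sum_range_of_condExp_eq_zero [IsProbabilityMeasure μ]
    (hf : ∀ j, StronglyMeasurable[ℱ (j + 1)] (f j)) {C : ℝ} (hfC : ∀ j, ∀ᵐ ω ∂μ, |f j ω| ≤ C)
    (hf0 : ∀ j, μ[f j|ℱ j] =ᵐ[μ] 0) :
    ∀ᵐ ω ∂μ, Tendsto (fun n : ℕ => (n : ℝ)⁻¹ * ∑ j ∈ Finset.range n, f j ω) atTop (𝓝 0) := by
  set g : ℕ → Ω → ℝ := fun j => ((j : ℝ) + 1)⁻¹ • f j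
  have hg : ∀ j, StronglyMeasurable[ℱ (j + 1)] (g j) := fun j => (hf j).const_smul _
  have hg2 : ∀ j, MemLp (g j) 2 μ := fun j =>
    (MemLp.of_bound ((hf j).mono (ℱ.le _)).aestronglyMeasurable C
      (by simpa only [Real.norm_eq_abs] using hfC j)).const_smul _
  have hg0 : ∀ j, μ[g j|ℱ j] =ᵐ[μ] 0 := fun j => by
    filter_upwards [condExp_smul (((j : ℝ) + 1)⁻¹) (f j) (ℱ j), hf0 j] with ω h1 h2
    simp [g, h1, h2]
  have hgC : ∀ j, ∫ ω, g j ω ^ 2 ∂μ ≤ C ^ 2 * (1 / ((j : ℝ) + 1) ^ 2) := fun j => by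
    have hpt : ∀ᵐ ω ∂μ, g j ω ^ 2 ≤ C ^ 2 * (1 / ((j : ℝ) + 1) ^ 2) := by
      filter_upwards [hfC j] with ω hω
      simp only [g, Pi.smul_apply, smul_eq_mul]
      rw [mul_pow, inv_pow, one_div, mul_comm]
      exact mul_le_mul_of_nonneg_right (sq_le_sq' (abs_le.1 hω).1 (abs_le.1 hω).2)
        (by positivity)
    calc ∫ ω, g j ω ^ 2 ∂μ ≤ ∫ _, C ^ 2 * (1 / ((j : ℝ) + 1) ^ 2) ∂μ :=
          integral_mono_ae (hg2 j).integrable_sq (integrable_const _) hpt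
      _ = C ^ 2 * (1 / ((j : ℝ) + 1) ^ 2) := by simp
  have hsum : Summable fun j => ∫ ω, g j ω ^ 2 ∂μ := by
    refine .of_nonneg_of_le (fun j => integral_nonneg fun _ => sq_nonneg _) hgC (.mul_left _ ?_)
    simpa using (summable_nat_add_iff 1).2 (Real.summable_one_div_nat_pow.2 one_lt_two)
  filter_upwards [ae_exists_tendsto_sum_range_of_condExp_eq_zero hg hg2 hg0 hsum]
    with ω ⟨L, hL⟩
  refine tendsto_inv_mul_sum_of_tendsto_sum_div_succ (hL.congr fun n => ?_)
  simp [g, div_eq_inv_mul]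

theorem ae_tendsto_inv_mul_sum_range_sub_condExp [IsProbabilityMeasure μ] {Y : ℕ → Ω → ℝ}
    (hY : ∀ j, StronglyMeasurable[ℱ (j + 1)] (Y j)) {R : ℝ}
    (hYR : ∀ j, ∀ᵐ ω ∂μ, |Y j ω| ≤ R) :
    ∀ᵐ ω ∂μ, Tendsto (fun n : ℕ => (n : ℝ)⁻¹ * ∑ j ∈ Finset.range n, (Y j ω - μ[Y j|ℱ j] ω))
      atTop (𝓝 0) := by
  have hYint : ∀ j, Integrable (Y j) μ := fun j =>
    .of_bound ((hY j).mono (ℱ.le _)).aestronglyMeasurable R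
      (by simpa only [Real.norm_eq_abs] using hYR j)
  refine ae_tendsto_inv_mul_sum_range_of_condExp_eq_zero (f := fun j => Y j - μ[Y j|ℱ j])
    (C := 2 * R) (fun j => (hY j).sub (stronglyMeasurable_condExp.mono (ℱ.mono j.le_succ)))
    (fun j => ?_) fun j => ?_
  · filter_upwards [hYR j, ae_bdd_abs_condExp_of_ae_bdd_abs (m := ℱ j) (hYR j)] with ω h1 h2
    exact (abs_sub _ _).trans (by linarith)
  · filter_upwards [condExp_sub (hYint j) integrable_condExp (ℱ j)] with ω hω
    rw [hω, Pi.sub_apply, condExp_of_stronglyMeasurable (ℱ.le j) stronglyMeasurable_condExp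
      integrable_condExp, sub_self, Pi.zero_apply]

end MartingaleDifference

theorem tendsto_natCast_div_div_natCast {ℓ : ℕ} (hℓ : ℓ ≠ 0) :
    Tendsto (fun n : ℕ => ((n / ℓ : ℕ) : ℝ) / n) atTop (𝓝 (ℓ : ℝ)⁻¹) := by
  have hfloor : ∀ n : ℕ, ((n / ℓ : ℕ) : ℝ) / n = ⌊(n : ℝ) / ℓ⌋₊ / ((n : ℝ) / ℓ) / ℓ := fun n => by
    rw [Nat.floor_div_eq_div, div_div, div_mul_cancel₀ _ (Nat.cast_ne_zero.2 hℓ)]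
  simp_rw [hfloor]
  have hdiv : Tendsto (fun n : ℕ => (n : ℝ) / ℓ) atTop atTop :=
    tendsto_natCast_atTop_atTop.atTop_div_const (by positivity)
  simpa using (tendsto_nat_floor_div_atTop.comp hdiv).div_const (ℓ : ℝ)

theorem sum_range_div_le_sum_range {x : ℕ → ℝ} (hx : ∀ k, 0 ≤ x k) {ℓ : ℕ} (hℓ : ℓ ≠ 0)
    (n : ℕ) : ∑ j ∈ Finset.range (n / ℓ), x ((j + 1) * ℓ) ≤ ∑ k ∈ Finset.range n, x (k + 1) := by
  let e : ℕ ↪ ℕ := ⟨fun j => (j + 1) * ℓ, fun a b h => by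
    simpa using Nat.eq_of_mul_eq_mul_right (Nat.pos_of_ne_zero hℓ) h⟩
  have hsub : (Finset.range (n / ℓ)).map e ⊆ Finset.Ico 1 (n + 1) := by
    intro k hk
    obtain ⟨j, hj, rfl⟩ := Finset.mem_map.1 hk
    have := (Nat.le_div_iff_mul_le (Nat.pos_of_ne_zero hℓ)).1 (Finset.mem_range.1 hj)
    rw [Finset.mem_Ico]
    change 1 ≤ (j + 1) * ℓ ∧ (j + 1) * ℓ < n + 1
    constructor <;> nlinarith [Nat.pos_of_ne_zero hℓ]
  calc ∑ j ∈ Finset.range (n / ℓ), x ((j + 1) * ℓ) = ∑ k ∈ (Finset.range (n / ℓ)).map e, x k :=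
        (Finset.sum_map _ e x).symm
    _ ≤ ∑ k ∈ Finset.Ico 1 (n + 1), x k :=
        Finset.sum_le_sum_of_subset_of_nonneg hsub fun k _ _ => hx k
    _ = ∑ k ∈ Finset.range n, x (k + 1) := by
        simp [Finset.sum_Ico_eq_sum_range, add_comm]

theorem le_liminf_inv_mul_sum_range_of_subsample {x : ℕ → ℝ} (hx0 : ∀ k, 0 ≤ x k)
    (hx1 : ∀ k, x k ≤ 1) {ℓ : ℕ} (hℓ : ℓ ≠ 0) {b : ℕ → ℝ} {β : ℝ} (hb : Tendsto b atTop (𝓝 β))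
    (hxb : ∀ m : ℕ, m * b m ≤ ∑ j ∈ Finset.range m, x ((j + 1) * ℓ)) :
    β / ℓ ≤ liminf (fun n : ℕ => (n : ℝ)⁻¹ * ∑ k ∈ Finset.range n, x (k + 1)) atTop := by
  set g : ℕ → ℝ := fun n => ((n / ℓ : ℕ) : ℝ) / n * b (n / ℓ)
  have hg : Tendsto g atTop (𝓝 (β / ℓ)) := by
    rw [div_eq_inv_mul]
    exact (tendsto_natCast_div_div_natCast hℓ).mul (hb.comp (Nat.tendsto_div_const_atTop hℓ))
  have hgx : ∀ n, g n ≤ (n : ℝ)⁻¹ * ∑ k ∈ Finset.range n, x (k + 1) := fun n =>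
    calc g n = (n : ℝ)⁻¹ * ((n / ℓ : ℕ) * b (n / ℓ)) := by simp only [g]; ring
      _ ≤ _ := mul_le_mul_of_nonneg_left ((hxb _).trans (sum_range_div_le_sum_range hx0 hℓ n))
          (by positivity)
  have hle_one : ∀ n : ℕ, (n : ℝ)⁻¹ * ∑ k ∈ Finset.range n, x (k + 1) ≤ 1 := fun n =>
    inv_mul_le_one_of_le₀ ((Finset.sum_le_sum fun k _ => hx1 (k + 1)).trans (by simp))
      n.cast_nonneg
  calc β / ℓ = liminf g atTop := hg.liminf_eq.symm
    _ ≤ _ := liminf_le_liminf (.of_forall hgx) hg.isBoundedUnder_ge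
        (isBoundedUnder_of ⟨1, hle_one⟩).isCoboundedUnder_ge

namespace MeasureTheory.Filtration

def subsample {Ω : Type*} {m : MeasurableSpace Ω} (ℱ : Filtration ℕ m) (ℓ : ℕ) :
    Filtration ℕ m where
  seq j := ℱ (j * ℓ)
  mono' _ _ h := ℱ.mono (Nat.mul_le_mul_right ℓ h)
  le' _ := ℱ.le _

end MeasureTheory.Filtration

theorem stmt_3_general {Ω : Type*} {m : MeasurableSpace Ω} {μ : Measure Ω}
    [IsProbabilityMeasure μ] (ℱ : Filtration ℕ m) (X : ℕ → Ω → ℝ)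
    (ℓ : ℕ) (hℓ : 1 ≤ ℓ) (δ₀ : ℝ)
    (hadapted : ∀ n, StronglyMeasurable[ℱ n] (X n))
    (h01 : ∀ n ω, X n ω = 0 ∨ X n ω = 1)
    (hcond : ∀ n, ∀ᵐ ω ∂μ, δ₀ ≤ (μ[X (n + ℓ)|ℱ n]) ω) :
    ∀ᵐ ω ∂μ, δ₀ / ℓ ≤
      liminf (fun n : ℕ => (1 / (n : ℝ)) * ∑ k ∈ Finset.range n, X (k + 1) ω) atTop := by
  have hX0 : ∀ n ω, 0 ≤ X n ω := fun n ω => by rcases h01 n ω with h | h <;> simp [h]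
  have hX1 : ∀ n ω, X n ω ≤ 1 := fun n ω => by rcases h01 n ω with h | h <;> simp [h]
  set Y : ℕ → Ω → ℝ := fun j => X ((j + 1) * ℓ)
  have hY : ∀ j, ∀ᵐ ω ∂μ, |Y j ω| ≤ 1 := fun j =>
    .of_forall fun ω => abs_le.2 ⟨by linarith [hX0 ((j + 1) * ℓ) ω], hX1 _ ω⟩
  have hlow : ∀ᵐ ω ∂μ, ∀ j, δ₀ ≤ μ[Y j|ℱ.subsample ℓ j] ω := ae_all_iff.2 fun j => by
    show ∀ᵐ ω ∂μ, δ₀ ≤ μ[X ((j + 1) * ℓ)|ℱ (j * ℓ)] ω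
    rw [add_one_mul]
    exact hcond _
  filter_upwards [ae_tendsto_inv_mul_sum_range_sub_condExp (ℱ := ℱ.subsample ℓ)
    (fun j => hadapted _) hY, hlow] with ω hω hδ
  have hb := (tendsto_const_nhds (x := δ₀)).add hω
  rw [add_zero] at hb
  simp only [one_div]
  refine le_liminf_inv_mul_sum_range_of_subsample (hX0 · ω) (hX1 · ω) (by omega) hb fun k => ?_
  have hδk : k * δ₀ ≤ ∑ j ∈ Finset.range k, μ[Y j|ℱ.subsample ℓ j] ω := by
    simpa using Finset.card_nsmul_le_sum (Finset.range k) _ δ₀ fun j _ => hδ j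
  rcases Nat.eq_zero_or_pos k with rfl | hk
  · simp
  rw [mul_add, mul_inv_cancel_left₀ (by positivity), Finset.sum_sub_distrib]
  linarith

theorem stmt_3 {Ω : Type*} {m : MeasurableSpace Ω} {μ : Measure Ω}
    [IsProbabilityMeasure μ] (ℱ : Filtration ℕ m) (X : ℕ → Ω → ℝ)
    (ℓ : ℕ) (hℓ : 1 ≤ ℓ) (δ₀ : ℝ) (hδ₀ : 0 < δ₀) (hδ₀le : δ₀ ≤ 1)
    (hadapted : ∀ n, StronglyMeasurable[ℱ n] (X n))
    (h01 : ∀ n ω, X n ω = 0 ∨ X n ω = 1)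
    (hcond : ∀ n, ∀ᵐ ω ∂μ, δ₀ ≤ (μ[X (n + ℓ)|ℱ n]) ω) :
    ∀ᵐ ω ∂μ, δ₀ / ℓ ≤
      liminf (fun n : ℕ => (1 / (n : ℝ)) * ∑ k ∈ Finset.range n, X (k + 1) ω) atTop :=
  stmt_3_general ℱ X ℓ hℓ δ₀ hadapted h01 hcond
end

section
/- Let p* ∈ C for a nonempty closed convex set C ⊆ ℝ^K, and consider the deterministic skewed gradient projection update p^{n+1}_k = [p^n + β^n (ν − M p^n)]_C (componentwise ν_k − μ_k p^n_k with all μ_k > 0), where p*_k = ν_k/μ_k, and (β^n) is positive with β^n → 0 and Σβ^n = ∞. Then p^n → p* as n → ∞. -/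
/-!
Writing `ν = M p*`, the gradient step is `g - p* = (I - βM)(p - p*)`, a diagonal map whose
entries lie in `[0, 1 - β c]` once `β μ_k ≤ 1`, where `c = min_k μ_k > 0`. The projection onto
`C` does not increase the distance to `p* ∈ C`, so the error contracts by `1 - β^n c ≤ exp (-c β^n)`
at every late step, and `Σ β^n = ∞` drives the product of these factors to zero.
-/

open Filter Topology Finset
open scoped InnerProductSpace

lemma norm_sub_le_of_forall_dist_le {F : Type*} [NormedAddCommGroup F] [InnerProductSpace ℝ F]
    {C : Set F} (hC : Convex ℝ C) {x q z : F} (hq : q ∈ C)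
    (hmin : ∀ w ∈ C, dist x q ≤ dist x w) (hz : z ∈ C) : ‖q - z‖ ≤ ‖x - z‖ := by
  have : Nonempty C := ⟨⟨q, hq⟩⟩
  have hbdd : BddBelow (Set.range fun w : C => ‖x - w‖) :=
    ⟨0, by rintro _ ⟨w, rfl⟩; exact norm_nonneg _⟩
  have hinf : ‖x - q‖ = ⨅ w : C, ‖x - w‖ :=
    le_antisymm (le_ciInf fun w => by simpa only [dist_eq_norm] using hmin w w.2)
      (ciInf_le hbdd ⟨q, hq⟩)
  have hinner : ⟪x - q, z - q⟫_ℝ ≤ 0 := (norm_eq_iInf_iff_real_inner_le_zero hC hq).mp hinf z hz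
  have hsq : ‖q - z‖ ^ 2 ≤ ‖x - z‖ ^ 2 := by
    have hsplit : x - z = (x - q) + (q - z) := by abel
    have hneg : ⟪x - q, q - z⟫_ℝ = -⟪x - q, z - q⟫_ℝ := by
      rw [← inner_neg_right, neg_sub]
    rw [hsplit, norm_add_sq_real, hneg]
    nlinarith [sq_nonneg ‖x - q‖]
  exact (sq_le_sq₀ (norm_nonneg _) (norm_nonneg _)).mp hsq

lemma EuclideanSpace.norm_le_mul_norm_of_abs_le {ι : Type*} [Fintype ι]
    {v w : EuclideanSpace ℝ ι} {r : ℝ} (hr : 0 ≤ r) (h : ∀ k, |w k| ≤ r * |v k|) :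
    ‖w‖ ≤ r * ‖v‖ := by
  have hsum : ∑ k, ‖w k‖ ^ 2 ≤ r ^ 2 * ∑ k, ‖v k‖ ^ 2 := by
    rw [mul_sum]
    refine sum_le_sum fun k _ => ?_
    simp only [Real.norm_eq_abs, ← mul_pow]
    exact pow_le_pow_left₀ (abs_nonneg _) (h k) 2
  rw [EuclideanSpace.norm_eq, EuclideanSpace.norm_eq, ← Real.sqrt_sq hr,
    ← Real.sqrt_mul (sq_nonneg r)]
  exact Real.sqrt_le_sqrt hsum

lemma exists_pos_forall_le_of_pos {ι : Type*} [Finite ι] {μ : ι → ℝ} (hμ : ∀ k, 0 < μ k) :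
    ∃ c > 0, ∀ k, c ≤ μ k := by
  rcases isEmpty_or_nonempty ι with _ | _
  · exact ⟨1, one_pos, isEmptyElim⟩
  · obtain ⟨k₀, hk₀⟩ := Finite.exists_min μ
    exact ⟨μ k₀, hμ k₀, hk₀⟩

lemma tendsto_zero_of_le_exp_neg_mul {e a : ℕ → ℝ} (he : ∀ n, 0 ≤ e n)
    (hstep : ∀ᶠ n in atTop, e (n + 1) ≤ Real.exp (-a n) * e n)
    (ha : Tendsto (fun n => ∑ k ∈ range n, a k) atTop atTop) :
    Tendsto e atTop (𝓝 0) := by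
  set S := fun n => ∑ k ∈ range n, a k
  obtain ⟨N, hN⟩ := eventually_atTop.mp hstep
  have hmono : ∀ n, N ≤ n → e n * Real.exp (S n) ≤ e N * Real.exp (S N) := by
    intro n hn
    induction n, hn using Nat.le_induction with
    | base => rfl
    | succ n hn ih =>
      calc e (n + 1) * Real.exp (S (n + 1))
          ≤ Real.exp (-a n) * e n * Real.exp (S (n + 1)) := by gcongr; exact hN n hn
        _ = e n * Real.exp (S n) := by
          simp only [S, sum_range_succ, Real.exp_add, Real.exp_neg]
          field_simp
        _ ≤ e N * Real.exp (S N) := ih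
  have hbound : ∀ᶠ n in atTop, e n ≤ e N * Real.exp (S N) * Real.exp (-S n) :=
    eventually_atTop.mpr ⟨N, fun n hn => by
      rw [Real.exp_neg, ← div_eq_mul_inv, le_div_iff₀ (Real.exp_pos _)]
      exact hmono n hn⟩
  have hlim : Tendsto (fun n => e N * Real.exp (S N) * Real.exp (-S n)) atTop (𝓝 0) := by
    simpa using (Real.tendsto_exp_atBot.comp (tendsto_neg_atTop_atBot.comp ha)).const_mul
      (e N * Real.exp (S N))
  exact squeeze_zero' (Eventually.of_forall he) hbound hlim

lemma abs_one_sub_mul_le {t c m : ℝ} (ht : 0 ≤ t) (hcm : c ≤ m) (htm : t * m ≤ 1) :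
    |1 - t * m| ≤ 1 - t * c := by
  rw [abs_of_nonneg (by linarith)]
  nlinarith

theorem stmt_5_general {K : ℕ}
    (C : Set (EuclideanSpace ℝ (Fin K)))
    (hconv : Convex ℝ C)
    (ν μv : Fin K → ℝ) (hμ : ∀ k, 0 < μv k)
    (pstar : EuclideanSpace ℝ (Fin K)) (hpstar : ∀ k, pstar k = ν k / μv k)
    (hpstarC : pstar ∈ C)
    (β : ℕ → ℝ) (hβpos : ∀ n, 0 < β n) (hβ0 : Tendsto β atTop (nhds 0))
    (hβdiv : Tendsto (fun n => ∑ k ∈ Finset.range n, β k) atTop atTop)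
    (p g : ℕ → EuclideanSpace ℝ (Fin K))
    (hg : ∀ n k, g n k = p n k + β n * (ν k - μv k * p n k))
    (hupd : ∀ n, p (n + 1) ∈ C ∧ ∀ z ∈ C, dist (g n) (p (n + 1)) ≤ dist (g n) z) :
    Tendsto p atTop (nhds pstar) := by
  obtain ⟨c, hc, hcμ⟩ := exists_pos_forall_le_of_pos hμ
  have hgap : ∀ n k, (g n - pstar) k = (1 - β n * μv k) * (p n - pstar) k := by
    intro n k
    simp only [PiLp.sub_apply, hg, hpstar]
    field_simp [(hμ k).ne']
    ring
  have hsmall : ∀ᶠ n in atTop, ∀ k, β n * μv k ≤ 1 := eventually_all.mpr fun k =>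
    ((hβ0.mul_const (μv k)).eventually (eventually_lt_nhds (by simp))).mono fun _ h => h.le
  have hstep : ∀ᶠ n in atTop,
      ‖p (n + 1) - pstar‖ ≤ Real.exp (-(c * β n)) * ‖p n - pstar‖ := by
    filter_upwards [hsmall] with n hn
    calc ‖p (n + 1) - pstar‖ ≤ ‖g n - pstar‖ :=
          norm_sub_le_of_forall_dist_le hconv (hupd n).1 (hupd n).2 hpstarC
      _ ≤ Real.exp (-(c * β n)) * ‖p n - pstar‖ :=
          EuclideanSpace.norm_le_mul_norm_of_abs_le (Real.exp_pos _).le fun k => by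
            rw [hgap, abs_mul]
            gcongr
            calc |1 - β n * μv k| ≤ 1 - β n * c := abs_one_sub_mul_le (hβpos n).le (hcμ k) (hn k)
              _ ≤ Real.exp (-(c * β n)) := by rw [mul_comm]; exact Real.one_sub_le_exp_neg _
  rw [tendsto_iff_norm_sub_tendsto_zero]
  exact tendsto_zero_of_le_exp_neg_mul (fun n => norm_nonneg _) hstep
    (by simpa only [← mul_sum] using hβdiv.const_mul_atTop hc)

theorem stmt_5 {K : ℕ} (hK : 0 < K)
    (C : Set (EuclideanSpace ℝ (Fin K)))
    (hne : C.Nonempty) (hclosed : IsClosed C) (hconv : Convex ℝ C)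
    (ν μv : Fin K → ℝ) (hμ : ∀ k, 0 < μv k)
    (pstar : EuclideanSpace ℝ (Fin K)) (hpstar : ∀ k, pstar k = ν k / μv k)
    (hpstarC : pstar ∈ C)
    (β : ℕ → ℝ) (hβpos : ∀ n, 0 < β n) (hβ0 : Tendsto β atTop (nhds 0))
    (hβdiv : Tendsto (fun n => ∑ k ∈ Finset.range n, β k) atTop atTop)
    (p g : ℕ → EuclideanSpace ℝ (Fin K)) (hp0 : p 0 ∈ C)
    (hg : ∀ n k, g n k = p n k + β n * (ν k - μv k * p n k))
    (hupd : ∀ n, p (n + 1) ∈ C ∧ ∀ z ∈ C, dist (g n) (p (n + 1)) ≤ dist (g n) z) :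
    Tendsto p atTop (nhds pstar) :=
  stmt_5_general C hconv ν μv hμ pstar hpstar hpstarC β hβpos hβ0 hβdiv p g hg hupd
end

section
/- Let (s_n) be a sequence of Bernoulli random variables adapted to a filtration with P(s_n = 1 | F_{n−1}) = q_n, where q_n → ν almost surely for a constant ν ∈ (0,1). Then (1/n) Σ_{k=1}^n s_k → ν almost surely. -/
/-! The centred increments `(s (k+1) - E[s (k+1) | ℱ k]) / (k+1)` are martingale differences
bounded by `2 / (k+1)`. Martingale increments are orthogonal in `L²`, so their partial sums form an
`L²`-bounded martingale, which converges almost surely. Kronecker's lemma turns this into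
`(1/n) ∑ (s (k+1) - q (k+1)) → 0`, and the Cesàro means of `q (k+1)` tend to `ν`. -/

open Filter MeasureTheory Finset
open scoped Topology

theorem tendsto_inv_mul_sum_of_tendsto_sum_inv_succ_mul {y : ℕ → ℝ} {L : ℝ}
    (h : Tendsto (fun n => ∑ k ∈ range n, ((k : ℝ) + 1)⁻¹ * y k) atTop (𝓝 L)) :
    Tendsto (fun n : ℕ => (n : ℝ)⁻¹ * ∑ k ∈ range n, y k) atTop (𝓝 0) := by
  set S : ℕ → ℝ := fun n => ∑ k ∈ range n, ((k : ℝ) + 1)⁻¹ * y k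
  -- Abel summation: `y k = (k + 1) * (S (k + 1) - S k)`.
  have abel : ∀ n, ∑ k ∈ range n, y k = n * S n - ∑ k ∈ range n, S k := by
    intro n
    induction n with
    | zero => simp [S]
    | succ n ih =>
      have hn : ((n : ℝ) + 1) ≠ 0 := n.cast_add_one_ne_zero
      simp only [sum_range_succ, ih, S]
      field_simp
      push_cast
      ring
  have hlim : Tendsto (fun n : ℕ => S n - (n : ℝ)⁻¹ * ∑ k ∈ range n, S k) atTop (𝓝 (L - L)) :=
    h.sub h.cesaro
  rw [sub_self] at hlim
  refine hlim.congr' ?_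
  filter_upwards [eventually_ne_atTop 0] with n hn
  rw [abel, mul_sub, inv_mul_cancel_left₀ (Nat.cast_ne_zero.2 hn)]

namespace MeasureTheory

section

variable {Ω E : Type*} [NormedAddCommGroup E] [NormedSpace ℝ E] [CompleteSpace E]
  {m m₀ : MeasurableSpace Ω} {μ : Measure Ω}

theorem condExp_sub_condExp_ae_eq_zero (hm : m ≤ m₀) [SigmaFinite (μ.trim hm)] {f : Ω → E}
    (hf : Integrable f μ) : μ[f - μ[f|m]|m] =ᵐ[μ] 0 := by
  filter_upwards [condExp_sub hf integrable_condExp m] with ω hω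
  rw [hω, Pi.sub_apply, condExp_of_stronglyMeasurable hm stronglyMeasurable_condExp integrable_condExp,
    sub_self, Pi.zero_apply]

theorem martingale_sum_range_of_condExp_ae_eq_zero [IsFiniteMeasure μ] {ℱ : Filtration ℕ m₀}
    {d : ℕ → Ω → E} (hd : ∀ k, StronglyMeasurable[ℱ (k + 1)] (d k))
    (hint : ∀ k, Integrable (d k) μ) (hd0 : ∀ k, μ[d k|ℱ k] =ᵐ[μ] 0) :
    Martingale (fun n => ∑ k ∈ range n, d k) ℱ μ := by
  refine martingale_of_condExp_sub_eq_zero_nat (fun n => ?_) (fun n => integrable_finsetSum' _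
    fun k _ => hint k) fun n => by simpa [sum_range_succ] using hd0 n
  exact Finset.stronglyMeasurable_sum _ fun k hk => (hd k).mono (ℱ.mono (mem_range.1 hk))

end

section

variable {Ω : Type*} {m₀ : MeasurableSpace Ω} {μ : Measure Ω} [IsFiniteMeasure μ]
  {ℱ : Filtration ℕ m₀} {f : ℕ → Ω → ℝ}

theorem Martingale.integral_mul_sub_eq_zero (hf : Martingale f ℱ μ)
    (hsq : ∀ n, MemLp (f n) 2 μ) (n : ℕ) :
    ∫ ω, f n ω * (f (n + 1) ω - f n ω) ∂μ = 0 := by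
  have hinc : μ[f (n + 1) - f n|ℱ n] =ᵐ[μ] 0 := by
    filter_upwards [condExp_sub (hf.integrable (n + 1)) (hf.integrable n) (ℱ n),
      hf.condExp_ae_eq n.le_succ, hf.condExp_ae_eq le_rfl] with ω h h₁ h₀
    rw [h, Pi.sub_apply, h₁, h₀, sub_self, Pi.zero_apply]
  have hpull : μ[f n * (f (n + 1) - f n)|ℱ n] =ᵐ[μ] 0 := by
    filter_upwards [condExp_mul_of_stronglyMeasurable_left (hf.stronglyAdapted n)
      ((hsq n).integrable_mul ((hsq (n + 1)).sub (hsq n)))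
      ((hf.integrable (n + 1)).sub (hf.integrable n)), hinc] with ω h h₀
    simp only [h, Pi.mul_apply, h₀, Pi.zero_apply, mul_zero]
  change ∫ ω, (f n * (f (n + 1) - f n)) ω ∂μ = 0
  rw [← integral_condExp (ℱ.le n), integral_congr_ae hpull]
  simp only [Pi.zero_apply, integral_zero]

theorem Martingale.integral_sq_eq_add_sum (hf : Martingale f ℱ μ)
    (hsq : ∀ n, MemLp (f n) 2 μ) (n : ℕ) :
    ∫ ω, f n ω ^ 2 ∂μ =
      ∫ ω, f 0 ω ^ 2 ∂μ + ∑ k ∈ range n, ∫ ω, (f (k + 1) ω - f k ω) ^ 2 ∂μ := by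
  induction n with
  | zero => simp
  | succ n ih =>
    have hd : MemLp (f (n + 1) - f n) 2 μ := (hsq (n + 1)).sub (hsq n)
    have hcross : Integrable (fun ω => 2 * (f n ω * (f (n + 1) ω - f n ω))) μ :=
      ((hsq n).integrable_mul hd).const_mul 2
    calc ∫ ω, f (n + 1) ω ^ 2 ∂μ
        = ∫ ω, (f n ω ^ 2 + 2 * (f n ω * (f (n + 1) ω - f n ω))
            + (f (n + 1) ω - f n ω) ^ 2) ∂μ := by congr 1; ext ω; ring
      _ = ∫ ω, f n ω ^ 2 ∂μ + ∫ ω, (f (n + 1) ω - f n ω) ^ 2 ∂μ := by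
        rw [integral_add, integral_add, integral_const_mul, hf.integral_mul_sub_eq_zero hsq,
          mul_zero, add_zero]
        exacts [(hsq n).integrable_sq, hcross, (hsq n).integrable_sq.add hcross, hd.integrable_sq]
      _ = _ := by rw [ih, sum_range_succ, add_assoc]

theorem eLpNorm_one_le_ofReal_integral_sq {g : Ω → ℝ} (hg : MemLp g 2 μ) :
    eLpNorm g 1 μ ≤ ENNReal.ofReal (μ.real Set.univ + ∫ ω, g ω ^ 2 ∂μ) := by
  rw [eLpNorm_one_eq_lintegral_enorm,
    ← ofReal_integral_norm_eq_lintegral_enorm (hg.integrable one_le_two)]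
  refine ENNReal.ofReal_le_ofReal ?_
  calc ∫ ω, ‖g ω‖ ∂μ ≤ ∫ ω, (1 + g ω ^ 2) ∂μ :=
        integral_mono (hg.integrable one_le_two).norm ((integrable_const 1).add hg.integrable_sq)
          fun ω => by nlinarith [sq_nonneg (|g ω| - 1), sq_abs (g ω), Real.norm_eq_abs (g ω)]
    _ = μ.real Set.univ + ∫ ω, g ω ^ 2 ∂μ := by
        rw [integral_add (integrable_const 1) hg.integrable_sq, integral_const, smul_eq_mul,
          mul_one]

theorem integral_sq_le_of_ae_abs_le {g : Ω → ℝ} {C : ℝ} (hg : ∀ᵐ ω ∂μ, |g ω| ≤ C) :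
    ∫ ω, g ω ^ 2 ∂μ ≤ C ^ 2 * μ.real Set.univ := by
  refine (Real.le_norm_self _).trans (norm_integral_le_of_norm_le_const ?_)
  filter_upwards [hg] with ω hω
  rw [Real.norm_eq_abs, abs_pow]
  exact pow_le_pow_left₀ (abs_nonneg _) hω 2

theorem Martingale.ae_exists_tendsto_of_summable_integral_sq_sub
    (hf : Martingale f ℱ μ) (hsq : ∀ n, MemLp (f n) 2 μ)
    (hsum : Summable fun k => ∫ ω, (f (k + 1) ω - f k ω) ^ 2 ∂μ) :
    ∀ᵐ ω ∂μ, ∃ c, Tendsto (fun n => f n ω) atTop (𝓝 c) := by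
  refine hf.submartingale.exists_ae_tendsto_of_bdd (R := Real.toNNReal
    (μ.real Set.univ + (∫ ω, f 0 ω ^ 2 ∂μ + ∑' k, ∫ ω, (f (k + 1) ω - f k ω) ^ 2 ∂μ))) fun n => ?_
  refine (eLpNorm_one_le_ofReal_integral_sq (hsq n)).trans (ENNReal.ofReal_le_ofReal ?_)
  rw [hf.integral_sq_eq_add_sum hsq n]
  gcongr
  exact hsum.sum_le_tsum _ fun k _ => integral_nonneg fun ω => sq_nonneg _

theorem ae_exists_tendsto_sum_inv_succ_mul_sub_condExp {Y : ℕ → Ω → ℝ} {R : ℝ}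
    (hY : ∀ k, StronglyMeasurable[ℱ (k + 1)] (Y k)) (hbdd : ∀ k, ∀ᵐ ω ∂μ, |Y k ω| ≤ R) :
    ∀ᵐ ω ∂μ, ∃ c, Tendsto (fun n => ∑ k ∈ range n, ((k : ℝ) + 1)⁻¹ * (Y k ω - μ[Y k|ℱ k] ω))
      atTop (𝓝 c) := by
  set d : ℕ → Ω → ℝ := fun k => ((k : ℝ) + 1)⁻¹ • (Y k - μ[Y k|ℱ k])
  have hYL2 (k : ℕ) : MemLp (Y k) 2 μ :=
    MemLp.of_bound ((hY k).mono (ℱ.le _)).aestronglyMeasurable R (hbdd k)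
  have hdL2 (k : ℕ) : MemLp (d k) 2 μ :=
    ((hYL2 k).sub ((hYL2 k).condExp one_le_two)).const_smul _
  have hd_bdd (k : ℕ) : ∀ᵐ ω ∂μ, |d k ω| ≤ 2 * R * ((k : ℝ) + 1)⁻¹ := by
    filter_upwards [hbdd k, ae_bdd_abs_condExp_of_ae_bdd_abs (m := ℱ k) (hbdd k)] with ω h h'
    have hk : (0 : ℝ) < ((k : ℝ) + 1)⁻¹ := by positivity
    simp only [d, Pi.smul_apply, Pi.sub_apply, smul_eq_mul, abs_mul, abs_of_pos hk]
    nlinarith [abs_sub (Y k ω) (μ[Y k|ℱ k] ω)]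
  have hM : Martingale (fun n => ∑ k ∈ range n, d k) ℱ μ := by
    refine martingale_sum_range_of_condExp_ae_eq_zero
      (fun k => ((hY k).sub (stronglyMeasurable_condExp.mono (ℱ.mono k.le_succ))).const_smul _)
      (fun k => (hdL2 k).integrable one_le_two) fun k => ?_
    filter_upwards [condExp_smul ((k : ℝ) + 1)⁻¹ (Y k - μ[Y k|ℱ k]) (ℱ k),
      condExp_sub_condExp_ae_eq_zero (ℱ.le k) ((hYL2 k).integrable one_le_two)] with ω h h₀
    simp only [d, h, Pi.smul_apply, h₀, Pi.zero_apply, smul_zero]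
  have hsum : Summable fun k => ∫ ω, (d k ω) ^ 2 ∂μ := by
    have hinv : Summable fun k : ℕ => (((k : ℝ) + 1) ^ 2)⁻¹ := by
      simpa using (summable_nat_add_iff 1).2 (Real.summable_nat_pow_inv.2 one_lt_two)
    refine Summable.of_nonneg_of_le (fun k => integral_nonneg fun ω => sq_nonneg _)
      (fun k => (integral_sq_le_of_ae_abs_le (hd_bdd k)).trans_eq ?_)
      (hinv.mul_left ((2 * R) ^ 2 * μ.real Set.univ))
    rw [mul_pow, inv_pow]
    ring
  filter_upwards [hM.ae_exists_tendsto_of_summable_integral_sq_sub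
    (fun n => memLp_finsetSum' _ fun k _ => hdL2 k) (by simpa [sum_range_succ] using hsum)]
    with ω ⟨c, hc⟩
  exact ⟨c, by simpa [d] using hc⟩

end

end MeasureTheory

theorem stmt_9_general {Ω : Type*} {m : MeasurableSpace Ω} {μ : Measure Ω}
    [IsProbabilityMeasure μ] (ℱ : Filtration ℕ m)
    (s q : ℕ → Ω → ℝ) (ν : ℝ)
    (hs01 : ∀ n ω, s n ω = 0 ∨ s n ω = 1)
    (hadapt : ∀ n, StronglyMeasurable[ℱ (n + 1)] (s (n + 1)))
    (hcond : ∀ n, μ[s (n + 1)|ℱ n] =ᵐ[μ] q (n + 1))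
    (hqconv : ∀ᵐ ω ∂μ, Tendsto (fun n => q (n + 1) ω) atTop (nhds ν)) :
    ∀ᵐ ω ∂μ, Tendsto (fun n : ℕ => (1 / (n : ℝ)) * ∑ k ∈ Finset.range n, s (k + 1) ω)
      atTop (nhds ν) := by
  have hs_bdd (k : ℕ) : ∀ᵐ ω ∂μ, |s (k + 1) ω| ≤ 1 :=
    ae_of_all _ fun ω => by rcases hs01 (k + 1) ω with h | h <;> simp [h]
  filter_upwards [ae_exists_tendsto_sum_inv_succ_mul_sub_condExp hadapt hs_bdd,
    ae_all_iff.2 hcond, hqconv] with ω ⟨c, hc⟩ hcondω hqω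
  have hlim := (tendsto_inv_mul_sum_of_tendsto_sum_inv_succ_mul hc).add hqω.cesaro
  rw [zero_add] at hlim
  refine hlim.congr fun n => ?_
  simp only [hcondω, sum_sub_distrib]
  ring

theorem stmt_9 {Ω : Type*} {m : MeasurableSpace Ω} {μ : Measure Ω}
    [IsProbabilityMeasure μ] (ℱ : Filtration ℕ m)
    (s q : ℕ → Ω → ℝ) (ν : ℝ) (hν0 : 0 < ν) (hν1 : ν < 1)
    (hs01 : ∀ n ω, s n ω = 0 ∨ s n ω = 1)
    (hadapt : ∀ n, StronglyMeasurable[ℱ (n + 1)] (s (n + 1)))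
    (hq : ∀ n, StronglyMeasurable[ℱ n] (q (n + 1)))
    (hcond : ∀ n, μ[s (n + 1)|ℱ n] =ᵐ[μ] q (n + 1))
    (hqconv : ∀ᵐ ω ∂μ, Tendsto (fun n => q (n + 1) ω) atTop (nhds ν)) :
    ∀ᵐ ω ∂μ, Tendsto (fun n : ℕ => (1 / (n : ℝ)) * ∑ k ∈ Finset.range n, s (k + 1) ω)
      atTop (nhds ν) :=
  stmt_9_general ℱ s q ν hs01 hadapt hcond hqconv
end

section
/- Let A_n, D_n, S_n be nondecreasing integer-valued processes with A_n/n → ν and S_n/n → ν almost surely for some ν > 0, define Q_n = Q_0 + A_n − D_n ≥ 0, and suppose that whenever Q_n > 0 one has the departure at time n equal to the service: d_n = s_n (where D_n = Σ d_k, S_n = Σ s_k, d_n, s_n ∈ {0,1}, d_n = s_n·1{Q_n > 0}). Then liminf_{n→∞} Q_n/n = 0 almost surely. -/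
open Filter

theorem stmt_10 (a s Q : ℕ → ℝ) (ν : ℝ) (hν : 0 < ν)
    (ha01 : ∀ n, a n = 0 ∨ a n = 1) (hs01 : ∀ n, s n = 0 ∨ s n = 1)
    (hQnn : ∀ n, 0 ≤ Q n)
    (hdyn : ∀ n, Q (n + 1) = Q n + a (n + 1) - s (n + 1) * (if 0 < Q n then 1 else 0))
    (hA : Tendsto (fun n : ℕ => (∑ k ∈ Finset.range n, a (k + 1)) / n) atTop (nhds ν))
    (hS : Tendsto (fun n : ℕ => (∑ k ∈ Finset.range n, s (k + 1)) / n) atTop (nhds ν)) :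
    liminf (fun n : ℕ => Q n / n) atTop = 0 := by
  -- upper bound Q n ≤ Q 0 + n
  have hQub : ∀ n, Q n ≤ Q 0 + n := by
    intro n
    induction n with
    | zero => simp
    | succ n ih =>
      have hd := hdyn n
      have ha' : a (n + 1) ≤ 1 := by rcases ha01 (n + 1) with h | h <;> simp [h]
      have hs' : 0 ≤ s (n + 1) * (if 0 < Q n then 1 else 0) := by
        rcases hs01 (n + 1) with h | h <;> split <;> simp [h]
      push_cast
      linarith
  have hbdd : IsBoundedUnder (· ≤ ·) atTop (fun n : ℕ => Q n / n) := by
    refine isBoundedUnder_of ⟨Q 0 + 1, fun n => ?_⟩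
    rcases Nat.eq_zero_or_pos n with h | h
    · subst h; simp; linarith [hQnn 0]
    · have hn : (0 : ℝ) < n := by exact_mod_cast h
      rw [div_le_iff₀ hn]
      have h1 : (1 : ℝ) ≤ n := by exact_mod_cast h
      nlinarith [hQub n, hQnn 0]
  have hbddge : IsBoundedUnder (· ≥ ·) atTop (fun n : ℕ => Q n / n) := by
    refine isBoundedUnder_of ⟨0, fun n => ?_⟩
    exact div_nonneg (hQnn n) (Nat.cast_nonneg n)
  have hge : (0 : ℝ) ≤ liminf (fun n : ℕ => Q n / n) atTop := by
    refine le_liminf_of_le (hbdd.isCoboundedUnder_ge) ?_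
    exact Eventually.of_forall fun n => div_nonneg (hQnn n) (Nat.cast_nonneg n)
  by_cases hfreq : ∀ N : ℕ, ∃ n, N ≤ n ∧ Q n = 0
  · -- liminf ≤ 0 via frequent zeros
    have hle : liminf (fun n : ℕ => Q n / n) atTop ≤ 0 := by
      refine liminf_le_of_frequently_le ?_ hbddge
      rw [frequently_atTop]
      intro N
      obtain ⟨n, hn, h0⟩ := hfreq N
      exact ⟨n, hn, by rw [h0]; simp⟩
    linarith
  · push_neg at hfreq
    obtain ⟨N, hN⟩ := hfreq
    have hpos : ∀ n, N ≤ n → 0 < Q n := fun n hn =>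
      lt_of_le_of_ne (hQnn n) (Ne.symm (hN n hn))
    set C : ℝ := ∑ k ∈ Finset.range N, (a (k + 1) - s (k + 1)) with hC
    have key : ∀ n, N ≤ n →
        Q n = Q N + (∑ k ∈ Finset.range n, (a (k + 1) - s (k + 1))) - C := by
      intro n hn
      induction n, hn using Nat.le_induction with
      | base => simp [hC]
      | succ n hn ih =>
        have hd := hdyn n
        rw [if_pos (hpos n hn)] at hd
        rw [Finset.sum_range_succ]
        linarith
    have hten : Tendsto (fun n : ℕ => Q n / n) atTop (nhds 0) := by
      have h1 : Tendsto (fun n : ℕ => (Q N - C) * (1 / (n : ℝ))) atTop (nhds ((Q N - C) * 0)) :=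
        tendsto_one_div_atTop_nhds_zero_nat.const_mul _
      have h2 : Tendsto (fun n : ℕ => (Q N - C) * (1 / (n : ℝ))
          + (∑ k ∈ Finset.range n, a (k + 1)) / n - (∑ k ∈ Finset.range n, s (k + 1)) / n)
          atTop (nhds ((Q N - C) * 0 + ν - ν)) := (h1.add hA).sub hS
      simp only [mul_zero, add_zero, add_sub_cancel_right] at h2
      refine h2.congr' ?_
      filter_upwards [eventually_ge_atTop N] with n hn
      rw [key n hn, Finset.sum_sub_distrib]
      ring
    rw [hten.liminf_eq]
end

section
/- With the single-queue setup where A_n/n → ν, S_n/n → ν a.s. (ν > 0), d_n = s_n·1{Q_n > 0}, queue increments bounded by 1 per slot, and liminf Q_n/n = 0 a.s., it follows that limsup_{n→∞} Q_n/n = 0 almost surely; i.e., the queue is rate stable. -/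
/-!
Write `B n = A n - S n` for the cumulative surplus of arrivals over services, so `B n / n → 0`.
Going back from time `n` to the last time `k` at which the queue was empty, the queue is never
empty on `[k + 1, n)`, so there it evolves freely with increments `a - s`, and
`Q n ≤ 1 + B n - B (k + 1)`. Hence `Q n ≤ max (Q m) 1 + 2 ε n` once `|B j| ≤ ε j` for `j ≥ m`.
Since `liminf Q n / n = 0`, such an `m` can be taken with `Q m ≤ ε m`, which gives `Q n ≤ 3 ε n`
for all large `n`.
-/

open Filter Finset

def netInput (a s : ℕ → ℝ) (n : ℕ) : ℝ :=
  ∑ k ∈ range n, (a (k + 1) - s (k + 1))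

lemma netInput_succ (a s : ℕ → ℝ) (n : ℕ) :
    netInput a s (n + 1) = netInput a s n + (a (n + 1) - s (n + 1)) :=
  sum_range_succ _ _

lemma tendsto_netInput_div {a s : ℕ → ℝ} {ν : ℝ}
    (hA : Tendsto (fun n : ℕ => (∑ k ∈ range n, a (k + 1)) / n) atTop (nhds ν))
    (hS : Tendsto (fun n : ℕ => (∑ k ∈ range n, s (k + 1)) / n) atTop (nhds ν)) :
    Tendsto (fun n : ℕ => netInput a s n / n) atTop (nhds 0) := by
  simpa [netInput, sum_sub_distrib, sub_div] using hA.sub hS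

lemma eventually_abs_le_mul_of_tendsto_div {f : ℕ → ℝ}
    (hf : Tendsto (fun n : ℕ => f n / n) atTop (nhds 0)) {ε : ℝ} (hε : 0 < ε) :
    ∀ᶠ n : ℕ in atTop, |f n| ≤ ε * n := by
  filter_upwards [hf.eventually (Metric.ball_mem_nhds 0 hε), eventually_gt_atTop 0] with n hlt hn
  have hn' : (0 : ℝ) < n := Nat.cast_pos.mpr hn
  rw [Real.dist_eq, sub_zero, abs_div, Nat.abs_cast, div_lt_iff₀ hn'] at hlt
  exact hlt.le

section Queue

variable {a s Q : ℕ → ℝ}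
  (hdyn : ∀ n, Q (n + 1) = Q n + a (n + 1) - s (n + 1) * (if 0 < Q n then 1 else 0))
include hdyn

lemma queue_le_add_nat (ha : ∀ n, a n ≤ 1) (hs : ∀ n, 0 ≤ s n) (n : ℕ) : Q n ≤ Q 0 + n := by
  induction n with
  | zero => simp
  | succ n ih =>
    have hserved : 0 ≤ s (n + 1) * (if 0 < Q n then 1 else 0) :=
      mul_nonneg (hs _) (by split_ifs <;> norm_num)
    push_cast
    linarith [hdyn n, ha (n + 1)]

lemma isCoboundedUnder_ge_queue_div (ha : ∀ n, a n ≤ 1) (hs : ∀ n, 0 ≤ s n) :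
    IsCoboundedUnder (· ≥ ·) atTop (fun n : ℕ => Q n / n) := by
  refine isCoboundedUnder_ge_of_eventually_le atTop (x := |Q 0| + 1) ?_
  filter_upwards [eventually_ge_atTop 1] with n hn
  have hn' : (1 : ℝ) ≤ n := by exact_mod_cast hn
  rw [div_le_iff₀ (by linarith)]
  nlinarith [queue_le_add_nat hdyn ha hs n, le_abs_self (Q 0), abs_nonneg (Q 0)]

/-- Lindley-type bound: `k` is one past the last time in `[m, n)` at which the queue is empty,
or `m` if there is none. -/
lemma exists_queue_le_netInput_sub (ha : ∀ n, a n ≤ 1) {m n : ℕ} (hmn : m ≤ n) :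
    ∃ k, m ≤ k ∧ k ≤ n ∧ Q n ≤ max (Q m) 1 + (netInput a s n - netInput a s k) := by
  induction n, hmn using Nat.le_induction with
  | base => exact ⟨m, le_rfl, le_rfl, by simp⟩
  | succ n hmn ih =>
    obtain ⟨k, hmk, hkn, hQn⟩ := ih
    have hstep := hdyn n
    by_cases hbusy : 0 < Q n
    · rw [if_pos hbusy, mul_one] at hstep
      refine ⟨k, hmk, hkn.trans n.le_succ, ?_⟩
      rw [netInput_succ]
      linarith
    · rw [if_neg hbusy, mul_zero, sub_zero] at hstep
      refine ⟨n + 1, hmn.trans n.le_succ, le_rfl, ?_⟩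
      linarith [ha (n + 1), le_max_right (Q m) 1, not_lt.mp hbusy]

lemma queue_le_three_mul (ha : ∀ n, a n ≤ 1) {ε : ℝ} {m n : ℕ}
    (hB : ∀ k, m ≤ k → |netInput a s k| ≤ ε * k) (hQm : Q m ≤ ε * m) (hmn : m ≤ n)
    (hεn : 1 ≤ ε * n) : Q n ≤ 3 * ε * n := by
  obtain ⟨k, hmk, hkn, hQn⟩ := exists_queue_le_netInput_sub hdyn ha hmn
  have hε : 0 ≤ ε := by
    by_contra! hneg
    nlinarith [(n.cast_nonneg : (0 : ℝ) ≤ n)]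
  have hmn' : ε * m ≤ ε * n := mul_le_mul_of_nonneg_left (by exact_mod_cast hmn) hε
  have hkn' : ε * k ≤ ε * n := mul_le_mul_of_nonneg_left (by exact_mod_cast hkn) hε
  have hstart : max (Q m) 1 ≤ ε * n := max_le (hQm.trans hmn') hεn
  have hsurplus : netInput a s n - netInput a s k ≤ 2 * ε * n := by
    linarith [le_abs_self (netInput a s n), neg_abs_le (netInput a s k),
      hB n hmn, hB k hmk]
  linarith

lemma eventually_queue_le_three_mul (ha : ∀ n, a n ≤ 1)
    (hB : Tendsto (fun n : ℕ => netInput a s n / n) atTop (nhds 0))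
    {ε : ℝ} (hε : 0 < ε) (hfreq : ∃ᶠ n : ℕ in atTop, Q n / n < ε) :
    ∀ᶠ n : ℕ in atTop, Q n ≤ 3 * ε * n := by
  obtain ⟨N, hN⟩ := eventually_atTop.mp (eventually_abs_le_mul_of_tendsto_div hB hε)
  obtain ⟨m, hQm, hmN⟩ := (hfreq.and_eventually (eventually_ge_atTop (max N 1))).exists
  have hm : (0 : ℝ) < m := by exact_mod_cast (le_max_right N 1).trans hmN
  rw [div_lt_iff₀ hm] at hQm
  filter_upwards [eventually_ge_atTop m,
    (tendsto_natCast_atTop_atTop.const_mul_atTop hε).eventually_ge_atTop 1] with n hmn hεn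
  exact queue_le_three_mul hdyn ha (fun k hk => hN k ((le_max_left N 1).trans (hmN.trans hk)))
    hQm.le hmn hεn

end Queue

theorem stmt_11_general (a s Q : ℕ → ℝ) (ν : ℝ)
    (ha01 : ∀ n, a n = 0 ∨ a n = 1) (hs01 : ∀ n, s n = 0 ∨ s n = 1)
    (hQnn : ∀ n, 0 ≤ Q n)
    (hdyn : ∀ n, Q (n + 1) = Q n + a (n + 1) - s (n + 1) * (if 0 < Q n then 1 else 0))
    (hA : Tendsto (fun n : ℕ => (∑ k ∈ Finset.range n, a (k + 1)) / n) atTop (nhds ν))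
    (hS : Tendsto (fun n : ℕ => (∑ k ∈ Finset.range n, s (k + 1)) / n) atTop (nhds ν))
    (hliminf : liminf (fun n : ℕ => Q n / n) atTop = 0) :
    limsup (fun n : ℕ => Q n / n) atTop = 0 := by
  have ha : ∀ n, a n ≤ 1 := fun n => by rcases ha01 n with h | h <;> simp [h]
  have hs : ∀ n, 0 ≤ s n := fun n => by rcases hs01 n with h | h <;> simp [h]
  refine (tendsto_order.mpr ⟨fun c hc => Eventually.of_forall fun n =>
    hc.trans_le (div_nonneg (hQnn n) n.cast_nonneg), fun ε hε => ?_⟩).limsup_eq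
  have hfreq : ∃ᶠ n : ℕ in atTop, Q n / n < ε / 4 :=
    frequently_lt_of_liminf_lt (isCoboundedUnder_ge_queue_div hdyn ha hs)
      (by rw [hliminf]; positivity)
  filter_upwards [eventually_queue_le_three_mul hdyn ha (tendsto_netInput_div hA hS)
    (by positivity) hfreq, eventually_gt_atTop 0] with n hQn hn
  have hn' : (0 : ℝ) < n := Nat.cast_pos.mpr hn
  rw [div_lt_iff₀ hn']
  nlinarith [mul_pos hε hn']

theorem stmt_11 (a s Q : ℕ → ℝ) (ν : ℝ) (hν : 0 < ν)
    (ha01 : ∀ n, a n = 0 ∨ a n = 1) (hs01 : ∀ n, s n = 0 ∨ s n = 1)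
    (hQnn : ∀ n, 0 ≤ Q n)
    (hdyn : ∀ n, Q (n + 1) = Q n + a (n + 1) - s (n + 1) * (if 0 < Q n then 1 else 0))
    (hA : Tendsto (fun n : ℕ => (∑ k ∈ Finset.range n, a (k + 1)) / n) atTop (nhds ν))
    (hS : Tendsto (fun n : ℕ => (∑ k ∈ Finset.range n, s (k + 1)) / n) atTop (nhds ν))
    (hliminf : liminf (fun n : ℕ => Q n / n) atTop = 0) :
    limsup (fun n : ℕ => Q n / n) atTop = 0 :=
  stmt_11_general a s Q ν ha01 hs01 hQnn hdyn hA hS hliminf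
end

section
/- If a real sequence satisfies Q_n ≥ 0, |Q_{n+1} − Q_n| ≤ 1, liminf Q_n/n = 0, and there is a sequence B_n with B_n/n → 0 such that for all n₁ < n₂ with Q_n > 0 on [n₁, n₂] we have B_{n₂} − B_{n₁} ≥ Q_{n₂} − Q_{n₁}, then limsup Q_n/n = 0. -/
open Filter

theorem stmt_12 (Q B : ℕ → ℝ)
    (hQnn : ∀ n, 0 ≤ Q n) (hinc : ∀ n, |Q (n + 1) - Q n| ≤ 1)
    (hliminf : liminf (fun n : ℕ => Q n / n) atTop = 0)
    (hB : Tendsto (fun n : ℕ => B n / n) atTop (nhds 0))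
    (hexc : ∀ n₁ n₂ : ℕ, n₁ < n₂ → (∀ m, n₁ ≤ m → m ≤ n₂ → 0 < Q m) →
      Q n₂ - Q n₁ ≤ B n₂ - B n₁) :
    limsup (fun n : ℕ => Q n / n) atTop = 0 := by
  classical
  have hnn : ∀ n : ℕ, (0 : ℝ) ≤ Q n / n := fun n =>
    div_nonneg (hQnn n) (Nat.cast_nonneg n)
  by_cases hbdd : ∃ a : ℝ, ∀ᶠ n : ℕ in atTop, Q n / n ≤ a
  swap
  · -- unbounded case: limsup is sInf of the empty set, which is 0 in ℝ
    rw [limsup_eq]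
    convert Real.sInf_empty using 2
    · rfl
    rw [Set.eq_empty_iff_forall_notMem]
    intro a ha
    exact hbdd ⟨a, ha⟩
  obtain ⟨a, ha⟩ := hbdd
  have hbdd' : IsBoundedUnder (· ≤ ·) atTop (fun n : ℕ => Q n / n) := ⟨a, by
    rwa [eventually_map]⟩
  have hcobge : IsCoboundedUnder (· ≥ ·) atTop (fun n : ℕ => Q n / n) :=
    hbdd'.isCoboundedUnder_ge
  have hcoble : IsCoboundedUnder (· ≤ ·) atTop (fun n : ℕ => Q n / n) :=
    isCoboundedUnder_le_of_le atTop hnn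
  -- key eventual bound
  have key : ∀ ε : ℝ, 0 < ε → ∀ᶠ n : ℕ in atTop, Q n / n ≤ 4 * ε := by
    intro ε hε
    -- eventually |B n| ≤ ε * n
    have hB' : ∀ᶠ n : ℕ in atTop, |B n| ≤ ε * n := by
      have h1 := (hB.eventually (Metric.ball_mem_nhds (0 : ℝ) hε)).and
        (eventually_ge_atTop 1)
      filter_upwards [h1] with n hn
      obtain ⟨hb, hn1⟩ := hn
      have hnpos : (0 : ℝ) < (n : ℝ) := by exact_mod_cast hn1
      have habs : |B n| / n < ε := by simpa [Real.dist_eq, abs_div] using hb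
      have h2 := (div_lt_iff₀ hnpos).mp habs
      linarith
    obtain ⟨N, hN⟩ := eventually_atTop.mp hB'
    -- get a good small time k₀
    have hfreq : ∃ᶠ n : ℕ in atTop, Q n / n < ε :=
      frequently_lt_of_liminf_lt hcobge (by rw [hliminf]; exact hε)
    obtain ⟨k₀, hk₀lt, hk₀ge⟩ :=
      (hfreq.and_eventually (eventually_ge_atTop (max N 1))).exists
    have hk₀1 : 1 ≤ k₀ := le_trans (le_max_right N 1) hk₀ge
    have hk₀N : N ≤ k₀ := le_trans (le_max_left N 1) hk₀ge
    have hk₀pos : (0 : ℝ) < (k₀ : ℝ) := by exact_mod_cast hk₀1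
    have hQk₀ : Q k₀ ≤ ε * k₀ := by
      have := (div_lt_iff₀ hk₀pos).mp hk₀lt
      linarith
    filter_upwards [eventually_gt_atTop k₀, eventually_ge_atTop ⌈1 / ε⌉₊]
      with n hn1 hn2
    have hnpos : (0 : ℝ) < (n : ℝ) := by
      exact_mod_cast lt_of_le_of_lt (Nat.zero_le k₀) hn1
    have h1εn : (1 : ℝ) ≤ ε * n := by
      have h3 : (1 / ε : ℝ) ≤ n := le_trans (Nat.le_ceil _) (by exact_mod_cast hn2)
      rw [div_le_iff₀ hε] at h3
      linarith [mul_comm ε (n : ℝ)]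
    set P : ℕ → Prop := fun m => k₀ ≤ m ∧ Q m ≤ ε * m with hP
    set k : ℕ := Nat.findGreatest P n with hk
    have hPk₀ : P k₀ := ⟨le_refl _, hQk₀⟩
    have hkk₀ : k₀ ≤ k := Nat.le_findGreatest hn1.le hPk₀
    have hPk : P k := Nat.findGreatest_spec hn1.le hPk₀
    have hkn : k ≤ n := Nat.findGreatest_le n
    have hQk : Q k ≤ ε * k := hPk.2
    have hεk : ε * k ≤ ε * n := by
      apply mul_le_mul_of_nonneg_left _ hε.le
      exact_mod_cast hkn
    -- main bound: Q n ≤ 4 ε n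
    have hmain : Q n ≤ 4 * ε * n := by
      rcases eq_or_lt_of_le hkn with hkeq | hklt
      · -- k = n
        rw [hkeq] at hQk
        nlinarith
      · -- k < n, so k+1 ≤ n
        have hpos : ∀ m, k + 1 ≤ m → m ≤ n → 0 < Q m := by
          intro m hm1 hm2
          have hnotP : ¬P m := Nat.findGreatest_is_greatest (by omega) hm2
          have hk₀m : k₀ ≤ m := by omega
          have hQm : ε * m < Q m := by
            by_contra h
            exact hnotP ⟨hk₀m, le_of_not_gt h⟩
          have : (0:ℝ) < ε * m := by
            have : (0:ℝ) < (m:ℝ) := by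
              have : 1 ≤ m := le_trans hk₀1 hk₀m
              exact_mod_cast this
            positivity
          linarith
        have hstep : Q (k + 1) ≤ Q k + 1 := by
          have := abs_le.mp (hinc k)
          linarith [this.2]
        rcases eq_or_lt_of_le (Nat.succ_le_of_lt hklt) with hkeq1 | hklt1
        · -- k + 1 = n
          have hQn : Q n = Q (k + 1) := by rw [← hkeq1]
          nlinarith
        · -- k + 1 < n : excursion
          have hexcn := hexc (k + 1) n hklt1 hpos
          have hBn : |B n| ≤ ε * n := hN n (by omega)
          have hBk1 : |B (k + 1)| ≤ ε * ((k : ℝ) + 1) := by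
            have := hN (k + 1) (by omega)
            push_cast at this
            linarith
          have hk1n : ((k : ℝ) + 1) ≤ (n : ℝ) := by exact_mod_cast hklt1.le
          have hεk1 : ε * ((k : ℝ) + 1) ≤ ε * n := mul_le_mul_of_nonneg_left hk1n hε.le
          have h1 := abs_le.mp hBn
          have h2 := abs_le.mp hBk1
          nlinarith
    rw [div_le_iff₀ hnpos]
    linarith
  -- conclude
  have hle : limsup (fun n : ℕ => Q n / n) atTop ≤ 0 := by
    apply le_of_forall_pos_le_add
    intro ε hε
    have h4 : (0:ℝ) < ε / 4 := by linarith
    have := limsup_le_of_le hcoble (key (ε / 4) h4)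
    linarith
  have hge : (0 : ℝ) ≤ limsup (fun n : ℕ => Q n / n) atTop :=
    le_limsup_of_frequently_le (Frequently.of_forall hnn) hbdd'
  linarith
end
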